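/- arXiv:1810.01042 — 6 statements merged into one kernel-verified Lean document; each statement's English description precedes it below -/
import Mathlib

section
/- Let D ⊆ ℝⁿ be a nonempty, compact, convex set. Then there exists a unique point u* ∈ D such that u* ≻_L u for every u ∈ D with u ≠ u* (i.e., the lexicographic maxmin solution over D exists and is unique). -/
/-- The components of `p`, sorted in nondecreasing order. -/
noncomputable def sortedVec {n : ℕ} (p : Fin n → ℝ) : List ℝ :=
  (Multiset.ofList (List.ofFn p)).sort (· ≤ ·)

/-- `p ≻_L q` : strict leximin dominance (the sorted lists are compared
lexicographically, from smallest component to largest). -/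
def LeximinGT {n : ℕ} (p q : Fin n → ℝ) : Prop :=
  List.Lex (· < ·) (sortedVec q) (sortedVec p)

/-- `p ⪰_L q` : weak leximin dominance. -/
def LeximinGE {n : ℕ} (p q : Fin n → ℝ) : Prop :=
  LeximinGT p q ∨ sortedVec p = sortedVec q

/-- Disagreement projection of `u` onto `v`: `π(u,v)ᵢ = uᵢ` if `uᵢ < vᵢ`, else `1`. -/
noncomputable def dproj {n : ℕ} (u v : Fin n → ℝ) : Fin n → ℝ :=
  fun i => if u i < v i then u i else 1

namespace LexAux

variable {n : ℕ}

noncomputable def msort (u : Fin n → ℝ) : Fin n → ℝ := u ∘ Tuple.sort u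

lemma msort_mono (u : Fin n → ℝ) : Monotone (msort u) := Tuple.monotone_sort u

lemma ofFn_comp_perm (u : Fin n → ℝ) (σ : Equiv.Perm (Fin n)) :
    (Multiset.ofList (List.ofFn (u ∘ σ))) = Multiset.ofList (List.ofFn u) := by
  rw [← Fin.univ_val_map, ← Fin.univ_val_map]
  calc Finset.univ.val.map (u ∘ σ) = Multiset.map u (Finset.univ.val.map σ) := by
        rw [Multiset.map_map]
    _ = Multiset.map u Finset.univ.val := by rw [Multiset.map_univ_val_equiv σ]

lemma sortedVec_eq_ofFn_msort (u : Fin n → ℝ) : sortedVec u = List.ofFn (msort u) := by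
  apply (fun hp h1 h2 => List.Perm.eq_of_pairwise' (r := (· ≤ · : ℝ → ℝ → Prop)) h1 h2 hp)
  · apply Multiset.coe_eq_coe.mp
    show ((Multiset.ofList (List.ofFn u)).sort (· ≤ ·) : Multiset ℝ) = _
    rw [Multiset.sort_eq]
    exact (ofFn_comp_perm u (Tuple.sort u)).symm
  · exact Multiset.pairwise_sort _ _
  · exact (msort_mono u).sortedLE_ofFn.pairwise

lemma msort_eq_msort {u v : Fin n → ℝ} (h : sortedVec u = sortedVec v) :
    msort u = msort v := by
  apply List.ofFn_injective
  rw [← sortedVec_eq_ofFn_msort, ← sortedVec_eq_ofFn_msort, h]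

/-- sum of the `k` smallest entries of `u`. -/
noncomputable def Smin (k : ℕ) (u : Fin n → ℝ) : ℝ :=
  ∑ i ∈ Finset.univ.filter (fun i : Fin n => (i : ℕ) < k), msort u i

lemma Smin_zero (u : Fin n → ℝ) : Smin 0 u = 0 := by
  simp [Smin]

lemma Smin_succ (u : Fin n → ℝ) (i : Fin n) :
    Smin ((i : ℕ) + 1) u = Smin (i : ℕ) u + msort u i := by
  unfold Smin
  have h : Finset.univ.filter (fun j : Fin n => (j : ℕ) < (i : ℕ) + 1)
      = insert i (Finset.univ.filter (fun j : Fin n => (j : ℕ) < (i : ℕ))) := by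
    ext j
    simp only [Finset.mem_filter, Finset.mem_univ, true_and, Finset.mem_insert]
    constructor
    · intro hj
      rcases Nat.lt_succ_iff_lt_or_eq.mp hj with h' | h'
      · exact Or.inr h'
      · exact Or.inl (Fin.ext h')
    · rintro (rfl | hj)
      · omega
      · omega
  rw [h, Finset.sum_insert (by simp)]
  ring

lemma Smin_congr {u v : Fin n → ℝ} (h : sortedVec u = sortedVec v) (k : ℕ) :
    Smin k u = Smin k v := by
  unfold Smin; rw [msort_eq_msort h]

lemma strictMono_le {k : ℕ} (f : Fin k → ℕ) (hf : StrictMono f) (t : Fin k) :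
    (t : ℕ) ≤ f t := by
  suffices h : ∀ m (hm : m < k), m ≤ f ⟨m, hm⟩ by
    obtain ⟨t, ht⟩ := t; exact h t ht
  intro m
  induction m with
  | zero => intro hm; exact Nat.zero_le _
  | succ p ih =>
    intro hm
    have hp : p < k := by omega
    have h2 := ih hp
    have h1 : f ⟨p, hp⟩ < f ⟨p + 1, hm⟩ := hf (by simp [Fin.lt_def])
    omega

lemma sum_prefix_le {k : ℕ} (m : Fin n → ℝ) (hm : Monotone m) (B : Finset (Fin n))
    (hB : B.card = k) :
    ∑ i ∈ Finset.univ.filter (fun i : Fin n => (i : ℕ) < k), m i ≤ ∑ i ∈ B, m i := by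
  have hk : k ≤ n := by
    rw [← hB]
    simpa using Finset.card_le_univ B
  set e := B.orderEmbOfFin hB with he
  have hBmap : B = Finset.univ.map e.toEmbedding := by
    ext x
    simp only [Finset.mem_map, Finset.mem_univ, true_and]
    constructor
    · intro hx
      have : x ∈ Set.range e := by rw [Finset.range_orderEmbOfFin]; exact hx
      obtain ⟨t, ht⟩ := this
      exact ⟨t, ht⟩
    · rintro ⟨t, rfl⟩
      exact B.orderEmbOfFin_mem hB t
  have hFmap : Finset.univ.filter (fun i : Fin n => (i : ℕ) < k)
      = Finset.univ.map (Fin.castLEOrderEmb hk).toEmbedding := by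
    ext x
    simp only [Finset.mem_filter, Finset.mem_univ, true_and, Finset.mem_map]
    constructor
    · intro hx
      exact ⟨⟨(x : ℕ), hx⟩, by ext; simp [Fin.castLEOrderEmb]⟩
    · rintro ⟨t, rfl⟩
      simpa [Fin.castLEOrderEmb] using t.isLt
  rw [hBmap, hFmap, Finset.sum_map, Finset.sum_map]
  apply Finset.sum_le_sum
  intro t _
  apply hm
  have : (t : ℕ) ≤ ((e t : Fin n) : ℕ) :=
    strictMono_le (fun s : Fin k => ((e s : Fin n) : ℕ))
      (fun a b hab => by exact_mod_cast e.strictMono hab) t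
  simpa [Fin.le_def, Fin.castLEOrderEmb] using this

lemma Smin_le_sum (u : Fin n → ℝ) {k : ℕ} (B : Finset (Fin n)) (hB : B.card = k) :
    Smin k u ≤ ∑ i ∈ B, u i := by
  classical
  set σ := Tuple.sort u with hσ
  set B' := B.image σ.symm with hB'
  have hcard : B'.card = k := by
    rw [hB', Finset.card_image_of_injective _ σ.symm.injective, hB]
  have h1 : ∑ i ∈ B', msort u i = ∑ i ∈ B, u i := by
    rw [hB', Finset.sum_image (by intro a _ b _ h; exact σ.symm.injective h)]
    apply Finset.sum_congr rfl
    intro x _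
    simp [msort, hσ]
  calc Smin k u ≤ ∑ i ∈ B', msort u i := sum_prefix_le (msort u) (msort_mono u) B' hcard
    _ = ∑ i ∈ B, u i := h1

lemma exists_Smin_eq (u : Fin n → ℝ) {k : ℕ} (hk : k ≤ n) :
    ∃ B : Finset (Fin n), B.card = k ∧ ∑ i ∈ B, u i = Smin k u := by
  classical
  set σ := Tuple.sort u with hσ
  set F := Finset.univ.filter (fun i : Fin n => (i : ℕ) < k) with hF
  refine ⟨F.image σ, ?_, ?_⟩
  · rw [Finset.card_image_of_injective _ σ.injective]
    have : F = Finset.univ.map (Fin.castLEOrderEmb hk).toEmbedding := by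
      ext x
      simp only [hF, Finset.mem_filter, Finset.mem_univ, true_and, Finset.mem_map]
      constructor
      · intro hx
        exact ⟨⟨(x : ℕ), hx⟩, by ext; simp [Fin.castLEOrderEmb]⟩
      · rintro ⟨t, rfl⟩
        simpa [Fin.castLEOrderEmb] using t.isLt
    rw [this, Finset.card_map, Finset.card_univ, Fintype.card_fin]
  · rw [Finset.sum_image (by intro a _ b _ h; exact σ.injective h)]
    apply Finset.sum_congr rfl
    intro x _
    simp [msort, hσ]

lemma continuous_Smin {k : ℕ} (hk : k ≤ n) : Continuous (Smin k : (Fin n → ℝ) → ℝ) := by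
  classical
  have hne : (Finset.univ.powersetCard k : Finset (Finset (Fin n))).Nonempty := by
    apply Finset.powersetCard_nonempty_of_le
    simpa using hk
  have heq : (Smin k : (Fin n → ℝ) → ℝ)
      = fun u => (Finset.univ.powersetCard k).inf' hne (fun B => ∑ i ∈ B, u i) := by
    funext u
    apply le_antisymm
    · apply Finset.le_inf'
      intro B hB
      exact Smin_le_sum u B (Finset.mem_powersetCard.mp hB).2
    · obtain ⟨B, hBc, hBs⟩ := exists_Smin_eq u hk
      rw [← hBs]
      exact Finset.inf'_le _ (Finset.mem_powersetCard.mpr ⟨Finset.subset_univ _, hBc⟩)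
  rw [heq]
  apply Continuous.finset_inf'_apply
  intro B _
  exact continuous_finset_sum _ (fun i _ => continuous_apply i)

lemma Smin_midpoint (u v : Fin n → ℝ) {k : ℕ} (hk : k ≤ n) :
    (Smin k u + Smin k v) / 2 ≤ Smin k (fun i => (u i + v i) / 2) := by
  obtain ⟨B, hBc, hBs⟩ := exists_Smin_eq (fun i => (u i + v i) / 2) hk
  have h1 : Smin k u ≤ ∑ i ∈ B, u i := Smin_le_sum u B hBc
  have h2 : Smin k v ≤ ∑ i ∈ B, v i := Smin_le_sum v B hBc
  have h3 : ∑ i ∈ B, (u i + v i) / 2 = (∑ i ∈ B, u i + ∑ i ∈ B, v i) / 2 := by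
    rw [← Finset.sum_add_distrib]
    rw [Finset.sum_div]
  rw [← hBs, h3]
  linarith

lemma sortedVec_eq_of_Smin {u v : Fin n → ℝ} (h : ∀ j ≤ n, Smin j u = Smin j v) :
    sortedVec u = sortedVec v := by
  rw [sortedVec_eq_ofFn_msort, sortedVec_eq_ofFn_msort]
  congr 1
  funext i
  have h1 := Smin_succ u i
  have h2 := Smin_succ v i
  have e1 : Smin ((i : ℕ) + 1) u = Smin ((i : ℕ) + 1) v := h _ i.isLt
  have e2 : Smin (i : ℕ) u = Smin (i : ℕ) v := h _ (le_of_lt i.isLt)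
  linarith

lemma lex_ofFn {m : ℕ} (f g : Fin m → ℝ) (t : Fin m) (hlt : f t < g t)
    (hpre : ∀ i, i < t → f i = g i) :
    List.Lex (· < ·) (List.ofFn f) (List.ofFn g) := by
  induction m with
  | zero => exact t.elim0
  | succ m ih =>
    rw [List.ofFn_succ, List.ofFn_succ]
    by_cases h0 : t = 0
    · subst h0
      exact List.Lex.rel hlt
    · have h00 : f 0 = g 0 := hpre 0 (Fin.pos_of_ne_zero h0)
      rw [h00]
      apply List.Lex.cons
      apply ih (fun i => f i.succ) (fun i => g i.succ) (t.pred h0)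
      · simpa [Fin.succ_pred] using hlt
      · intro i hi
        apply hpre
        rw [Fin.lt_def] at hi ⊢
        simp only [Fin.val_succ, Fin.coe_pred] at hi ⊢
        have ht1 : 0 < (t : ℕ) := by
          exact Nat.pos_of_ne_zero (fun h => h0 (Fin.ext h))
        omega

lemma leximinGT_of_first_diff {u v : Fin n → ℝ} (j : ℕ) (hj : j ≤ n)
    (hpre : ∀ i < j, Smin i u = Smin i v) (hlt : Smin j u < Smin j v) :
    LeximinGT v u := by
  have hj0 : j ≠ 0 := by
    rintro rfl
    rw [Smin_zero, Smin_zero] at hlt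
    exact lt_irrefl _ hlt
  have hjn : j - 1 < n := by omega
  set t : Fin n := ⟨j - 1, hjn⟩ with htdef
  have htj : (t : ℕ) + 1 = j := by simp [htdef]; omega
  have hmt : msort u t < msort v t := by
    have h1 := Smin_succ u t
    have h2 := Smin_succ v t
    have e2 : Smin (t : ℕ) u = Smin (t : ℕ) v := hpre _ (by omega)
    rw [htj] at h1 h2
    linarith
  have hmpre : ∀ i : Fin n, i < t → msort u i = msort v i := by
    intro i hi
    have h1 := Smin_succ u i
    have h2 := Smin_succ v i
    have hi' : (i : ℕ) < j - 1 := by simpa [htdef, Fin.lt_def] using hi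
    have e1 : Smin ((i : ℕ) + 1) u = Smin ((i : ℕ) + 1) v := hpre _ (by omega)
    have e2 : Smin (i : ℕ) u = Smin (i : ℕ) v := hpre _ (by omega)
    linarith
  unfold LeximinGT
  rw [sortedVec_eq_ofFn_msort, sortedVec_eq_ofFn_msort]
  exact lex_ofFn _ _ t hmt hmpre

lemma sum_sq_congr {u v : Fin n → ℝ} (h : sortedVec u = sortedVec v) :
    ∑ i, (u i) ^ 2 = ∑ i, (v i) ^ 2 := by
  have hm : msort u = msort v := msort_eq_msort h
  have h1 : ∀ w : Fin n → ℝ, ∑ i, (w i) ^ 2 = ∑ i, (msort w i) ^ 2 := by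
    intro w
    rw [← Equiv.sum_comp (Tuple.sort w) (fun i => (w i) ^ 2)]
    rfl
  rw [h1 u, h1 v, hm]

lemma eq_of_midpoint_sq {u v : Fin n → ℝ}
    (h1 : ∑ i, ((u i + v i) / 2) ^ 2 = ∑ i, (u i) ^ 2)
    (h2 : ∑ i, ((u i + v i) / 2) ^ 2 = ∑ i, (v i) ^ 2) : u = v := by
  have hz : ∑ i, (u i - v i) ^ 2 = 0 := by
    have : ∑ i : Fin n, (u i - v i) ^ 2
        = 2 * ∑ i, (u i) ^ 2 + 2 * ∑ i, (v i) ^ 2 - 4 * ∑ i, ((u i + v i) / 2) ^ 2 := by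
      rw [Finset.mul_sum, Finset.mul_sum, Finset.mul_sum, ← Finset.sum_add_distrib,
        ← Finset.sum_sub_distrib]
      apply Finset.sum_congr rfl
      intro i _
      ring
    rw [this]
    linarith
  funext i
  have := (Finset.sum_eq_zero_iff_of_nonneg
    (fun i _ => sq_nonneg (u i - v i))).mp hz i (Finset.mem_univ i)
  have : u i - v i = 0 := by
    nlinarith [this]
  linarith

end LexAux

open LexAux in
/-- a nonempty, compact, convex `D ⊆ ℝⁿ` has a unique point `u*`
that strictly leximin-dominates every other point of `D`. -/
theorem stmt_0 {n : ℕ} (D : Set (Fin n → ℝ)) (hne : D.Nonempty)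
    (hcomp : IsCompact D) (hconv : Convex ℝ D) :
    ∃! ustar : Fin n → ℝ, ustar ∈ D ∧ ∀ u ∈ D, u ≠ ustar → LeximinGT ustar u := by
  classical
  have key : ∀ k : ℕ, k ≤ n → ∃ K : Set (Fin n → ℝ), K.Nonempty ∧ IsCompact K ∧ K ⊆ D ∧
      (∀ x ∈ K, ∀ y ∈ K, ∀ j ≤ k, Smin j x = Smin j y) ∧
      (∀ u ∈ D, ∀ x ∈ K, (∀ j ≤ k, Smin j u = Smin j x) → u ∈ K) ∧
      (∀ u ∈ D, ∀ x ∈ K, u ∉ K →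
        ∃ j ≤ k, (∀ i < j, Smin i u = Smin i x) ∧ Smin j u < Smin j x) := by
    intro k
    induction k with
    | zero =>
      intro _
      refine ⟨D, hne, hcomp, subset_rfl, ?_, ?_, ?_⟩
      · intro x _ y _ j hj
        have : j = 0 := Nat.le_zero.mp hj
        subst this
        rw [Smin_zero, Smin_zero]
      · intro u hu _ _ _; exact hu
      · intro u hu x _ hK; exact absurd hu hK
    | succ k ih =>
      intro hk1
      obtain ⟨K, hKne, hKcomp, hKD, h4, h5, h6⟩ := ih (by omega)
      have hcont : ContinuousOn (Smin (k + 1)) K := (continuous_Smin hk1).continuousOn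
      obtain ⟨x₀, hx₀K, hx₀max⟩ := hKcomp.exists_isMaxOn hKne hcont
      set M := Smin (k + 1) x₀ with hM
      refine ⟨K ∩ (Smin (k + 1) ⁻¹' {M}), ⟨x₀, hx₀K, rfl⟩,
        hKcomp.inter_right (IsClosed.preimage (continuous_Smin hk1) isClosed_singleton),
        Set.inter_subset_left.trans hKD, ?_, ?_, ?_⟩
      · rintro x ⟨hxK, hxM⟩ y ⟨hyK, hyM⟩ j hj
        by_cases hjk : j ≤ k
        · exact h4 x hxK y hyK j hjk
        · have : j = k + 1 := by omega
          subst this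
          rw [Set.mem_preimage, Set.mem_singleton_iff] at hxM hyM
          rw [hxM, hyM]
      · rintro u hu x ⟨hxK, hxM⟩ hall
        have huK : u ∈ K := h5 u hu x hxK (fun j hj => hall j (by omega))
        refine ⟨huK, ?_⟩
        rw [Set.mem_preimage, Set.mem_singleton_iff] at hxM ⊢
        rw [hall (k + 1) le_rfl, hxM]
      · rintro u hu x ⟨hxK, hxM⟩ huK'
        by_cases huK : u ∈ K
        · refine ⟨k + 1, le_rfl, ?_, ?_⟩
          · intro i hi; exact h4 u huK x hxK i (by omega)
          · have hle : Smin (k + 1) u ≤ M := hx₀max huK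
            have hne' : Smin (k + 1) u ≠ M := by
              intro hEq
              exact huK' ⟨huK, by rw [Set.mem_preimage, Set.mem_singleton_iff]; exact hEq⟩
            rw [Set.mem_preimage, Set.mem_singleton_iff] at hxM
            rw [hxM]
            exact lt_of_le_of_ne hle hne'
        · obtain ⟨j, hj, hpre, hlt⟩ := h6 u hu x hxK huK
          exact ⟨j, by omega, hpre, hlt⟩
  obtain ⟨K, hKne, hKcomp, hKD, h4, h5, h6⟩ := key n le_rfl
  obtain ⟨xs, hxsK⟩ := hKne
  have hxsD : xs ∈ D := hKD hxsK
  have main : ∀ u ∈ D, u ≠ xs → LeximinGT xs u := by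
    intro u hu hneq
    by_cases hK : u ∈ K
    · exfalso
      have hSeq : ∀ j ≤ n, Smin j u = Smin j xs := fun j hj => h4 u hK xs hxsK j hj
      have hsorted : sortedVec u = sortedVec xs := sortedVec_eq_of_Smin hSeq
      set w : Fin n → ℝ := fun i => (u i + xs i) / 2 with hw
      have hwD : w ∈ D := by
        have := hconv hu hxsD (by norm_num : (0:ℝ) ≤ 1/2) (by norm_num : (0:ℝ) ≤ 1/2)
          (by norm_num)
        convert this using 1
        funext i
        simp only [hw, Pi.add_apply, Pi.smul_apply, smul_eq_mul]
        ring
      have hwK : w ∈ K := by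
        by_contra hwK
        obtain ⟨j, hj, hpre, hlt⟩ := h6 w hwD xs hxsK hwK
        have hmid := Smin_midpoint u xs hj
        rw [← hw] at hmid
        have := hSeq j hj
        linarith
      have hSw : ∀ j ≤ n, Smin j w = Smin j xs := fun j hj => h4 w hwK xs hxsK j hj
      have hsw : sortedVec w = sortedVec xs := sortedVec_eq_of_Smin hSw
      have h1 : ∑ i, (w i) ^ 2 = ∑ i, (u i) ^ 2 := by
        rw [sum_sq_congr hsw, sum_sq_congr hsorted]
      have h2 : ∑ i, (w i) ^ 2 = ∑ i, (xs i) ^ 2 := sum_sq_congr hsw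
      simp only [hw] at h1 h2
      exact hneq (eq_of_midpoint_sq h1 h2)
    · obtain ⟨j, hj, hpre, hlt⟩ := h6 u hu xs hxsK hK
      exact leximinGT_of_first_diff j hj hpre hlt
  refine ⟨xs, ⟨hxsD, main⟩, ?_⟩
  rintro y ⟨hyD, hy⟩
  by_contra hne'
  have h1 : LeximinGT y xs := hy xs hxsD (fun h => hne' h.symm)
  have h2 : LeximinGT xs y := main y hyD hne'
  unfold LeximinGT at h1 h2
  exact asymm h1 h2
end

section
/- Let D ⊆ ℝⁿ be a nonempty compact set. Then there exists u* ∈ D such that u* ⪰_L u for every u ∈ D (a leximin maximizer exists on any nonempty compact set). -/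
/-! ### Auxiliary material -/

/-- The `k`-th smallest component. -/
noncomputable def sOrd {n : ℕ} (k : ℕ) (p : Fin n → ℝ) : ℝ :=
  (sortedVec p).getD k 0

lemma length_sortedVec {n : ℕ} (p : Fin n → ℝ) : (sortedVec p).length = n := by
  simp [sortedVec]

lemma sorted_sortedVec {n : ℕ} (p : Fin n → ℝ) : (sortedVec p).Pairwise (· ≤ ·) :=
  Multiset.pairwise_sort _ _

lemma countP_sortedVec {n : ℕ} (p : Fin n → ℝ) (x : ℝ) :
    (sortedVec p).countP (fun a => decide (a ≤ x)) =
      (List.finRange n).countP (fun i => decide (p i ≤ x)) := by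
  have h1 : ((sortedVec p : List ℝ) : Multiset ℝ) = Multiset.ofList (List.ofFn p) :=
    Multiset.sort_eq _ _
  have h2 : (sortedVec p).countP (fun a => decide (a ≤ x)) =
      (List.ofFn p).countP (fun a => decide (a ≤ x)) := by
    have := congrArg (Multiset.countP (fun a => decide (a ≤ x))) h1
    simpa using this
  rw [h2, List.ofFn_eq_map, List.countP_map]
  rfl

/-- The key counting characterization of order statistics. -/
lemma getD_sorted_le_iff {l : List ℝ} (hl : l.Pairwise (· ≤ ·)) {k : ℕ} (hk : k < l.length)
    (x : ℝ) :
    l.getD k 0 ≤ x ↔ k + 1 ≤ l.countP (fun a => decide (a ≤ x)) := by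
  constructor
  · intro h
    have hsplit : l = l.take (k + 1) ++ l.drop (k + 1) := (List.take_append_drop _ _).symm
    have hlen : (l.take (k + 1)).length = k + 1 := by
      rw [List.length_take]; omega
    have hall : ∀ a ∈ l.take (k + 1), (fun a => decide (a ≤ x)) a = true := by
      intro a ha
      obtain ⟨j, hj, rfl⟩ := List.mem_iff_getElem.mp ha
      rw [List.getElem_take]
      have hjl : j < l.length := by rw [List.length_take] at hj; omega
      have : l[j] ≤ l[k] := by
        rcases lt_or_eq_of_le (Nat.lt_succ_iff.mp (by rw [List.length_take] at hj; omega :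
            j < k + 1)) with h' | h'
        · simpa using hl.rel_get_of_lt (a := ⟨j, hjl⟩) (b := ⟨k, hk⟩) h'
        · subst h'; rfl
      have hgd : l.getD k 0 = l[k] := List.getD_eq_getElem l 0 hk
      simp only [decide_eq_true_eq]
      calc l[j] ≤ l[k] := this
        _ ≤ x := by rw [← hgd]; exact h
    have hcount : (l.take (k + 1)).countP (fun a => decide (a ≤ x)) = k + 1 := by
      rw [List.countP_eq_length.mpr hall, hlen]
    calc k + 1 = (l.take (k + 1)).countP (fun a => decide (a ≤ x)) := hcount.symm
      _ ≤ (l.take (k + 1)).countP _ + (l.drop (k + 1)).countP (fun a => decide (a ≤ x)) :=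
          Nat.le_add_right _ _
      _ = l.countP (fun a => decide (a ≤ x)) := by rw [← List.countP_append, ← hsplit]
  · intro h
    by_contra hx
    push_neg at hx
    have hgd : l.getD k 0 = l[k] := List.getD_eq_getElem l 0 hk
    rw [hgd] at hx
    have hdrop : (l.drop k).countP (fun a => decide (a ≤ x)) = 0 := by
      rw [List.countP_eq_zero]
      intro a ha
      obtain ⟨j, hj, rfl⟩ := List.mem_iff_getElem.mp ha
      rw [List.getElem_drop]
      have hkj : k + j < l.length := by rw [List.length_drop] at hj; omega
      have : l[k] ≤ l[k + j] := by
        rcases Nat.eq_or_lt_of_le (Nat.le_add_right k j) with h' | h'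
        · exact le_of_eq (by congr 1)
        · simpa using hl.rel_get_of_lt (a := ⟨k, hk⟩) (b := ⟨k + j, hkj⟩) h'
      simp only [decide_eq_true_eq, not_le]
      exact lt_of_lt_of_le hx this
    have hsplit : l = l.take k ++ l.drop k := (List.take_append_drop _ _).symm
    have : l.countP (fun a => decide (a ≤ x)) ≤ k := by
      calc l.countP (fun a => decide (a ≤ x))
          = (l.take k).countP (fun a => decide (a ≤ x))
              + (l.drop k).countP (fun a => decide (a ≤ x)) := by
            rw [← List.countP_append, ← hsplit]
        _ = (l.take k).countP (fun a => decide (a ≤ x)) := by rw [hdrop]; ring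
        _ ≤ (l.take k).length := List.countP_le_length
        _ ≤ k := by rw [List.length_take]; omega
    omega

lemma sOrd_le_iff {n : ℕ} {k : ℕ} (hk : k < n) (p : Fin n → ℝ) (x : ℝ) :
    sOrd k p ≤ x ↔ k + 1 ≤ (List.finRange n).countP (fun i => decide (p i ≤ x)) := by
  rw [sOrd, getD_sorted_le_iff (sorted_sortedVec p) (by rw [length_sortedVec]; exact hk),
    countP_sortedVec]

lemma sOrd_le_add {n : ℕ} {k : ℕ} (hk : k < n) (p q : Fin n → ℝ) {ε : ℝ}
    (h : ∀ i, p i ≤ q i + ε) : sOrd k p ≤ sOrd k q + ε := by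
  rw [sOrd_le_iff hk]
  have h1 : k + 1 ≤ (List.finRange n).countP (fun i => decide (q i ≤ sOrd k q)) :=
    (sOrd_le_iff hk q (sOrd k q)).mp le_rfl
  refine le_trans h1 (List.countP_mono_left ?_)
  intro i _ hi
  simp only [decide_eq_true_eq] at hi ⊢
  calc p i ≤ q i + ε := h i
    _ ≤ sOrd k q + ε := by linarith

lemma continuous_sOrd {n : ℕ} {k : ℕ} (hk : k < n) :
    Continuous (fun p : Fin n → ℝ => sOrd k p) := by
  refine (LipschitzWith.continuous (K := 1) ?_)
  intro p q
  rw [ENNReal.coe_one, one_mul, edist_dist, edist_dist, ENNReal.ofReal_le_ofReal_iff dist_nonneg]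
  rw [Real.dist_eq, abs_sub_le_iff]
  constructor
  · have := sOrd_le_add hk p q (ε := dist p q) (fun i => by
      have := dist_le_pi_dist p q i
      have h2 := abs_sub_le_iff.mp (le_trans (le_of_eq (Real.dist_eq _ _).symm) this)
      linarith [h2.1])
    linarith
  · have := sOrd_le_add hk q p (ε := dist p q) (fun i => by
      have := dist_le_pi_dist p q i
      have h2 := abs_sub_le_iff.mp (le_trans (le_of_eq (Real.dist_eq _ _).symm) this)
      linarith [h2.2])
    linarith

/-- Iterated argmax sets. -/
def argSet {n : ℕ} (D : Set (Fin n → ℝ)) : ℕ → Set (Fin n → ℝ)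
  | 0 => D
  | k + 1 => {p ∈ argSet D k | ∀ q ∈ argSet D k, sOrd k q ≤ sOrd k p}

lemma argSet_antitone {n : ℕ} (D : Set (Fin n → ℝ)) {j k : ℕ} (h : j ≤ k) :
    argSet D k ⊆ argSet D j := by
  induction k with
  | zero => simp [Nat.le_zero.mp h]
  | succ k ih =>
    rcases Nat.lt_or_ge j (k + 1) with h' | h'
    · exact fun p hp => ih (Nat.lt_succ_iff.mp h') hp.1
    · have : j = k + 1 := le_antisymm h h'
      subst this; exact fun p hp => hp

lemma argSet_compact_nonempty {n : ℕ} {D : Set (Fin n → ℝ)} (hne : D.Nonempty)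
    (hcomp : IsCompact D) : ∀ k ≤ n, IsCompact (argSet D k) ∧ (argSet D k).Nonempty := by
  intro k
  induction k with
  | zero => exact fun _ => ⟨hcomp, hne⟩
  | succ k ih =>
    intro hk
    obtain ⟨hc, hn⟩ := ih (by omega)
    have hcont : Continuous (fun p : Fin n → ℝ => sOrd k p) := continuous_sOrd (by omega)
    constructor
    · have : argSet D (k + 1) =
          argSet D k ∩ ⋂ q ∈ argSet D k, {p | sOrd k q ≤ sOrd k p} := by
        ext p
        simp [argSet, Set.mem_iInter]
      rw [this]
      refine hc.inter_right ?_
      exact isClosed_biInter (fun q _ => isClosed_le continuous_const hcont)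
    · obtain ⟨p, hp, hmax⟩ := hc.exists_isMaxOn hn hcont.continuousOn
      exact ⟨p, hp, fun q hq => hmax hq⟩

lemma lex_of_getD : ∀ (k : ℕ) (l l' : List ℝ), k < l.length → k < l'.length →
    (∀ j, j < k → l.getD j 0 = l'.getD j 0) → l.getD k 0 < l'.getD k 0 →
    List.Lex (· < ·) l l' := by
  intro k
  induction k with
  | zero =>
    rintro (_ | ⟨a, t⟩) (_ | ⟨b, t'⟩) h1 h2 _ hlt <;> simp_all
    exact List.Lex.rel hlt
  | succ k ih =>
    rintro (_ | ⟨a, t⟩) (_ | ⟨b, t'⟩) h1 h2 heq hlt <;> simp_all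
    have hab : a = b := by have := heq 0 (by omega); simpa using this
    subst hab
    exact List.Lex.cons (ih t t' (by omega) (by omega)
      (fun j hj => by have := heq (j + 1) (by omega); simpa using this) (by simpa using hlt))

/-- a leximin maximizer exists on any nonempty compact set. -/
theorem stmt_1 {n : ℕ} (D : Set (Fin n → ℝ)) (hne : D.Nonempty)
    (hcomp : IsCompact D) :
    ∃ ustar ∈ D, ∀ u ∈ D, LeximinGE ustar u := by
  obtain ⟨hcN, ustar, hustar⟩ := argSet_compact_nonempty hne hcomp n le_rfl
  refine ⟨ustar, argSet_antitone D (Nat.zero_le n) hustar, ?_⟩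
  intro u hu
  -- key fact: if all order statistics up to k agree, then u ∈ argSet D k
  have key : ∀ k ≤ n, (∀ j, j < k → sOrd j u = sOrd j ustar) → u ∈ argSet D k := by
    intro k
    induction k with
    | zero => exact fun _ _ => hu
    | succ k ih =>
      intro hk heq
      have hmem : u ∈ argSet D k := ih (by omega) (fun j hj => heq j (by omega))
      have hst : ustar ∈ argSet D (k + 1) := argSet_antitone D hk hustar
      refine ⟨hmem, fun q hq => ?_⟩
      rw [heq k (by omega)]
      exact hst.2 q hq
  by_cases hall : ∀ j, j < n → sOrd j u = sOrd j ustar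
  · right
    apply List.ext_getElem (by rw [length_sortedVec, length_sortedVec])
    intro j h1 h2
    have hjn : j < n := by rwa [length_sortedVec] at h1
    have := hall j hjn
    rw [sOrd, sOrd, List.getD_eq_getElem _ 0 h2, List.getD_eq_getElem _ 0 h1] at this
    exact this.symm
  · left
    push_neg at hall
    have hex : ∃ j, j < n ∧ sOrd j u ≠ sOrd j ustar := hall
    classical
    set k := Nat.find hex with hkdef
    obtain ⟨hkn, hkne⟩ := Nat.find_spec hex
    have hprefix : ∀ j, j < k → sOrd j u = sOrd j ustar := by
      intro j hj
      by_contra hne'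
      exact Nat.find_min hex hj ⟨by omega, hne'⟩
    have hmem : u ∈ argSet D k := key k (by omega) hprefix
    have hst : ustar ∈ argSet D (k + 1) := argSet_antitone D hkn hustar
    have hle : sOrd k u ≤ sOrd k ustar := hst.2 u hmem
    have hlt : sOrd k u < sOrd k ustar := lt_of_le_of_ne hle hkne
    unfold LeximinGT
    apply lex_of_getD k
    · rw [length_sortedVec]; exact hkn
    · rw [length_sortedVec]; exact hkn
    · exact hprefix
    · exact hlt
end

section
/- Let u, w ∈ [0,1]ⁿ be such that the sets X = {i : u_i > w_i} and Y = {i : w_i > u_i} are both nonempty. If u D-dominates w, i.e., π(u,w) ⪰_L π(w,u), then the midpoint satisfies (1/2)(u + w) ≻_L w. -/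
open Classical in
lemma count_sortedVec {n : ℕ} (p : Fin n → ℝ) (y : ℝ) :
    (sortedVec p).count y = (Finset.univ.filter (fun i => p i = y)).card := by
  classical
  have h1 : (sortedVec p).count y = Multiset.count y (Multiset.ofList (List.ofFn p)) := by
    rw [← Multiset.coe_count]; congr 1; exact Multiset.sort_eq _ _
  have h2 : (Multiset.ofList (List.ofFn p)) = Multiset.map p Finset.univ.val := by
    rw [Fin.univ_def, List.ofFn_eq_map]; rfl
  rw [h1, h2, Multiset.count_map]
  have h3 : Multiset.filter (fun a => y = p a) Finset.univ.val
      = (Finset.univ.filter (fun i => p i = y)).val := by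
    rw [Finset.filter_val]
    simp [eq_comm]
  rw [h3]
  rfl

lemma mem_sortedVec {n : ℕ} (p : Fin n → ℝ) (i : Fin n) : p i ∈ sortedVec p := by
  rw [sortedVec, Multiset.mem_sort]
  simp [List.mem_ofFn]

lemma mem_sortedVec' {n : ℕ} {p : Fin n → ℝ} {a : ℝ} (h : a ∈ sortedVec p) : ∃ i, p i = a := by
  rw [sortedVec, Multiset.mem_sort] at h
  simpa [List.mem_ofFn, Set.mem_range] using h

lemma head_le_of_sorted {a x : ℝ} {t : List ℝ} (hs : (a :: t).Pairwise (· ≤ ·))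
    (hx : x ∈ a :: t) : a ≤ x := by
  rcases List.mem_cons.mp hx with h | h
  · exact le_of_eq h.symm
  · exact (List.pairwise_cons.mp hs).1 x h

lemma lex_aux (x : ℝ) : ∀ (l' l : List ℝ), l.length = l'.length →
    l.Pairwise (· ≤ ·) → l'.Pairwise (· ≤ ·) →
    (∀ y, y < x → l.count y = l'.count y) → l'.count x < l.count x →
    List.Lex (· < ·) l l'
  | [], l, hlen, _, _, _, hx => by
      have : l = [] := List.length_eq_zero_iff.mp (by simpa using hlen)
      subst this; simp at hx
  | b :: t', a :: t, hlen, hs, hs', hlt, hx => by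
      rcases lt_trichotomy a b with h | h | h
      · exact List.Lex.rel h
      · subst h
        apply List.Lex.cons
        apply lex_aux x t' t
        · simpa using hlen
        · exact hs.of_cons
        · exact hs'.of_cons
        · intro y hy
          have := hlt y hy
          simp only [List.count_cons] at this
          omega
        · simp only [List.count_cons] at hx
          omega
      · exfalso
        have hx1 : 0 < (a :: t).count x := lt_of_le_of_lt (Nat.zero_le _) hx
        have hxm : x ∈ a :: t := List.count_pos_iff.mp hx1
        have hax : a ≤ x := head_le_of_sorted hs hxm
        have hbx : b < x := lt_of_lt_of_le h hax
        have hcnt := hlt b hbx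
        have hb' : 0 < (b :: t').count b := by simp
        have hb : 0 < (a :: t).count b := by omega
        have hbm : b ∈ a :: t := List.count_pos_iff.mp hb
        have : a ≤ b := head_le_of_sorted hs hbm
        linarith

/-- if `u, w ∈ [0,1]ⁿ`, both `{i : uᵢ > wᵢ}` and `{i : wᵢ > uᵢ}` are
nonempty, and `u` D-dominates `w`, then the midpoint `(1/2)(u+w) ≻_L w`. -/
theorem stmt_4 {n : ℕ} (u w : Fin n → ℝ)
    (hu : ∀ i, u i ∈ Set.Icc (0 : ℝ) 1) (hw : ∀ i, w i ∈ Set.Icc (0 : ℝ) 1)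
    (hX : ∃ i, u i > w i) (hY : ∃ i, w i > u i)
    (hdom : LeximinGE (dproj u w) (dproj w u)) :
    LeximinGT ((1 / 2 : ℝ) • (u + w)) w := by
  classical
  obtain ⟨i₀, hi₀⟩ := hX
  set m : Fin n → ℝ := (1 / 2 : ℝ) • (u + w) with hm
  have hmi : ∀ i, m i = (u i + w i) / 2 := by
    intro i; simp [hm]; ring
  have hnpos : 0 < n := i₀.pos
  have hlenB : (sortedVec (dproj w u)).length = n := length_sortedVec _
  have hlenA : (sortedVec (dproj u w)).length = n := length_sortedVec _
  obtain ⟨b, tB, hB⟩ : ∃ b t, sortedVec (dproj w u) = b :: t := by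
    cases hsB : sortedVec (dproj w u) with
    | nil => rw [hsB] at hlenB; simp at hlenB; omega
    | cons b t => exact ⟨b, t, rfl⟩
  obtain ⟨a, tA, hA⟩ : ∃ a t, sortedVec (dproj u w) = a :: t := by
    cases hsA : sortedVec (dproj u w) with
    | nil => rw [hsA] at hlenA; simp at hlenA; omega
    | cons a t => exact ⟨a, t, rfl⟩
  -- b is ≤ every entry of dproj w u
  have H1 : ∀ i, b ≤ dproj w u i := by
    intro i
    have hmem := mem_sortedVec (dproj w u) i
    rw [hB] at hmem
    exact head_le_of_sorted (hB ▸ sorted_sortedVec (dproj w u)) hmem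
  -- b ≤ a from the dominance hypothesis
  have hba : b ≤ a := by
    rcases hdom with hlex | heq
    · unfold LeximinGT at hlex
      rw [hA, hB] at hlex
      cases hlex with
      | rel h => exact le_of_lt h
      | cons h => exact le_refl _
    · rw [hA, hB] at heq
      exact le_of_eq (List.head_eq_of_cons_eq heq).symm
  -- hence b ≤ every entry of dproj u w
  have H3 : ∀ i, b ≤ dproj u w i := by
    intro i
    have hmem := mem_sortedVec (dproj u w) i
    rw [hA] at hmem
    exact le_trans hba (head_le_of_sorted (hA ▸ sorted_sortedVec (dproj u w)) hmem)
  -- translate to u, w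
  have hXf : ∀ i, w i < u i → b ≤ w i := by
    intro i h
    have := H1 i
    rwa [dproj, if_pos h] at this
  have hYf : ∀ i, u i < w i → b ≤ u i := by
    intro i h
    have := H3 i
    rwa [dproj, if_pos h] at this
  -- b < 1
  have hb1 : b < 1 := by
    have h1 : b ≤ w i₀ := hXf i₀ hi₀
    have h2 : u i₀ ≤ 1 := (hu i₀).2
    linarith
  -- there is i₁ ∈ X with w i₁ = b
  obtain ⟨i₁, hi₁⟩ : ∃ i, dproj w u i = b := by
    apply mem_sortedVec'
    rw [hB]; exact List.mem_cons_self
  have hwi₁ : w i₁ = b ∧ w i₁ < u i₁ := by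
    by_cases h : w i₁ < u i₁
    · rw [dproj, if_pos h] at hi₁; exact ⟨hi₁, h⟩
    · rw [dproj, if_neg h] at hi₁; exact absurd hi₁.symm (ne_of_lt hb1)
  -- key pointwise facts
  have hkey : ∀ i, (w i < u i → b ≤ w i ∧ w i < m i) ∧
      (u i < w i → b < m i ∧ m i < w i) ∧ (u i = w i → m i = w i) := by
    intro i
    refine ⟨fun h => ⟨hXf i h, ?_⟩, fun h => ⟨?_, ?_⟩, fun h => ?_⟩
    · rw [hmi i]; linarith
    · have h1 := hYf i h; rw [hmi i]; linarith
    · rw [hmi i]; linarith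
    · rw [hmi i]; linarith
  -- apply the lex lemma
  show List.Lex (· < ·) (sortedVec w) (sortedVec m)
  apply lex_aux b (sortedVec m) (sortedVec w)
  · rw [length_sortedVec, length_sortedVec]
  · exact sorted_sortedVec w
  · exact sorted_sortedVec m
  · -- counts below b agree
    intro y hy
    rw [count_sortedVec, count_sortedVec]
    congr 1
    apply Finset.filter_congr
    intro i _
    rcases lt_trichotomy (u i) (w i) with h | h | h
    · obtain ⟨h1, h2⟩ := (hkey i).2.1 h
      constructor
      · intro hww; exfalso; linarith
      · intro hmm; exfalso; linarith
    · rw [(hkey i).2.2 h]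
    · obtain ⟨h1, h2⟩ := (hkey i).1 h
      constructor
      · intro hww; exfalso; linarith
      · intro hmm; exfalso; linarith
  · -- count of b strictly smaller in m
    rw [count_sortedVec, count_sortedVec]
    apply Finset.card_lt_card
    constructor
    · intro i hi
      simp only [Finset.mem_filter, Finset.mem_univ, true_and] at hi ⊢
      rcases lt_trichotomy (u i) (w i) with h | h | h
      · obtain ⟨h1, h2⟩ := (hkey i).2.1 h
        exfalso; linarith [hi ▸ h1]
      · rw [← (hkey i).2.2 h]; exact hi
      · obtain ⟨h1, h2⟩ := (hkey i).1 h
        exfalso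
        have : b < m i := lt_of_le_of_lt h1 h2
        linarith [hi ▸ this]
    · intro hsub
      have hi₁w : i₁ ∈ Finset.univ.filter (fun i => w i = b) := by
        simp [hwi₁.1]
      have hi₁m := hsub hi₁w
      simp only [Finset.mem_filter, Finset.mem_univ, true_and] at hi₁m
      have := (hkey i₁).1 hwi₁.2
      linarith [hwi₁.1, this.2, hi₁m]
end

section
/- The lexicographic maxmin solution is Pareto optimal: if D ⊆ ℝⁿ and u* ∈ D satisfies u* ⪰_L u for every u ∈ D, then there is no u ∈ D with u ≠ u* and u_i ≥ u*_i for all coordinates i. -/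
lemma sortedVec_perm {n : ℕ} (f : Fin n → ℝ) : (sortedVec f).Perm (List.ofFn f) := by
  have := Multiset.sort_eq (Multiset.ofList (List.ofFn f)) (· ≤ ·)
  exact Multiset.coe_eq_coe.mp this

lemma sortedVec_eq {n : ℕ} (f : Fin n → ℝ) :
    sortedVec f = List.ofFn (f ∘ Tuple.sort f) := by
  exact List.Perm.eq_of_pairwise' (r := (· ≤ ·))
    (hl := (sortedVec_perm f).trans ((Tuple.sort f).ofFn_comp_perm f).symm)
    (Multiset.pairwise_sort _ _) ((Tuple.monotone_sort f).sortedLE_ofFn.pairwise)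

lemma exists_ge_of_card {n : ℕ} (k : Fin n) (T : Finset (Fin n))
    (hT : (k : ℕ) + 1 ≤ T.card) : ∃ j ∈ T, k ≤ j := by
  by_contra h
  push_neg at h
  have hsub : T ⊆ Finset.Iio k := fun j hj => Finset.mem_Iio.mpr (h j hj)
  have := Finset.card_le_card hsub
  rw [Fin.card_Iio] at this
  omega

/-- Order statistics are monotone. -/
lemma sorted_mono {n : ℕ} (u v : Fin n → ℝ) (h : ∀ i, v i ≤ u i) (k : Fin n) :
    v (Tuple.sort v k) ≤ u (Tuple.sort u k) := by
  set σ := Tuple.sort u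
  set τ := Tuple.sort v
  set T : Finset (Fin n) := (Finset.Iic k).image (fun j => τ.symm (σ j)) with hTdef
  have hcard : (k : ℕ) + 1 ≤ T.card := by
    rw [hTdef, Finset.card_image_of_injective _ (fun a b hab => by
      simpa using (σ.injective (τ.symm.injective hab))), Fin.card_Iic]
  obtain ⟨j, hjT, hkj⟩ := exists_ge_of_card k T hcard
  obtain ⟨j', hj', hjeq⟩ := Finset.mem_image.mp hjT
  have h1 : v (τ k) ≤ v (τ j) := Tuple.monotone_sort v hkj
  have h2 : τ j = σ j' := by rw [← hjeq]; simp
  have h3 : v (σ j') ≤ u (σ j') := h _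
  have h4 : u (σ j') ≤ u (σ k) := Tuple.monotone_sort u (Finset.mem_Iic.mp hj')
  calc v (τ k) ≤ v (τ j) := h1
    _ = v (σ j') := by rw [h2]
    _ ≤ u (σ j') := h3
    _ ≤ u (σ k) := h4

lemma no_lex (a b : List ℝ) (hlen : a.length = b.length)
    (h : ∀ k (h1 : k < a.length) (h2 : k < b.length), a.get ⟨k, h1⟩ ≤ b.get ⟨k, h2⟩) :
    ¬ List.Lex (· < ·) b a := by
  intro hlex
  induction hlex with
  | nil => simp at hlen
  | @cons x l1 l2 _ ih =>
      exact ih (by simpa using hlen) (fun k h1 h2 => by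
        have := h (k+1) (by simpa using Nat.succ_lt_succ h1)
          (by simpa using Nat.succ_lt_succ h2)
        simpa using this)
  | @rel x l1 y l2 hxy =>
      have := h 0 (by simp) (by simp)
      simp at this
      exact absurd hxy (not_lt.mpr this)

/-- a leximin maximizer is Pareto optimal. -/
theorem stmt_7 {n : ℕ} (D : Set (Fin n → ℝ)) (ustar : Fin n → ℝ)
    (hmem : ustar ∈ D) (hmax : ∀ u ∈ D, LeximinGE ustar u) :
    ¬ ∃ u ∈ D, u ≠ ustar ∧ ∀ i, ustar i ≤ u i := by
  rintro ⟨u, huD, hne, hle⟩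
  have hlen : (sortedVec ustar).length = (sortedVec u).length := by
    rw [sortedVec_eq, sortedVec_eq]; simp
  have hpt : ∀ k (h1 : k < (sortedVec ustar).length) (h2 : k < (sortedVec u).length),
      (sortedVec ustar).get ⟨k, h1⟩ ≤ (sortedVec u).get ⟨k, h2⟩ := by
    intro k h1 h2
    have hk : k < n := by
      have := h1; rw [sortedVec_eq] at this; simpa using this
    rw [List.get_of_eq (sortedVec_eq ustar), List.get_of_eq (sortedVec_eq u)]
    simp only [List.get_ofFn]
    exact sorted_mono u ustar hle ⟨k, hk⟩
  rcases hmax u huD with hgt | heq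
  · exact no_lex _ _ hlen hpt hgt
  · -- sums differ
    have hsum : ∀ f : Fin n → ℝ, (sortedVec f).sum = ∑ i, f i := by
      intro f
      rw [(sortedVec_perm f).sum_eq, List.sum_ofFn]
    have hi : ∃ i, ustar i < u i := by
      by_contra hc
      push_neg at hc
      exact hne (funext fun i => le_antisymm (hc i) (hle i))
    obtain ⟨i, hi⟩ := hi
    have : ∑ j, ustar j < ∑ j, u j :=
      Finset.sum_lt_sum (fun j _ => hle j) ⟨i, Finset.mem_univ i, hi⟩
    rw [← hsum, ← hsum, heq] at this
    exact lt_irrefl _ this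
end

section
/- Pareto dominance implies strict D-dominance: if u, v ∈ [0,1]ⁿ satisfy u_i ≥ v_i for all i and u ≠ v, then u strictly D-dominates v, i.e., π(u,v) ≻_L π(v,u). -/
/-- Pareto dominance implies strict D-dominance on `[0,1]ⁿ`. -/
theorem stmt_9 {n : ℕ} (u v : Fin n → ℝ)
    (hu : ∀ i, u i ∈ Set.Icc (0 : ℝ) 1) (hv : ∀ i, v i ∈ Set.Icc (0 : ℝ) 1)
    (hge : ∀ i, v i ≤ u i) (hne : u ≠ v) :
    LeximinGT (dproj u v) (dproj v u) := by
  obtain ⟨i, hi⟩ : ∃ i, v i < u i := by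
    by_contra h
    push_neg at h
    exact hne (funext fun i => le_antisymm (h i) (hge i))
  have hp : ∀ x ∈ sortedVec (dproj u v), x = (1 : ℝ) := by
    intro x hx
    rw [sortedVec, Multiset.mem_sort, Multiset.mem_coe, List.mem_ofFn] at hx
    obtain ⟨j, rfl⟩ := hx
    simp [dproj, not_lt.2 (hge j)]
  have hmem : v i ∈ sortedVec (dproj v u) := by
    rw [sortedVec, Multiset.mem_sort, Multiset.mem_coe, List.mem_ofFn]
    exact ⟨i, by simp [dproj, hi]⟩
  have hsorted : (sortedVec (dproj v u)).Pairwise (· ≤ ·) :=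
    Multiset.pairwise_sort _ _
  unfold LeximinGT
  cases hq' : sortedVec (dproj v u) with
  | nil => rw [hq'] at hmem; simp at hmem
  | cons a t =>
    cases hp' : sortedVec (dproj u v) with
    | nil =>
      have : (sortedVec (dproj u v)).length = (sortedVec (dproj v u)).length := by
        simp [sortedVec, Multiset.length_sort]
      rw [hp', hq'] at this
      simp at this
    | cons b s =>
      have hb : b = 1 := hp b (by rw [hp']; exact List.mem_cons_self)
      have hav : a ≤ v i := by
        rw [hq'] at hmem hsorted
        rcases List.mem_cons.1 hmem with h | h
        · exact le_of_eq h.symm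
        · exact (List.rel_of_pairwise_cons hsorted) h
      exact List.Lex.rel (by
        rw [hb]
        exact lt_of_le_of_lt hav (lt_of_lt_of_le hi (hu i).2))
end

section
/- Strict D-dominance is preserved under deleting a coordinate where the dominating vector is smaller: let u, v ∈ [0,1]ⁿ with n ≥ 2, suppose u strictly D-dominates v, and let j be a coordinate with u_j < v_j. Let u', v' ∈ [0,1]^{n-1} be the vectors obtained from u and v by deleting coordinate j. Then u' strictly D-dominates v' (where the disagreement projections are now taken in ℝ^{n-1}). -/
/- ### Auxiliary lemmas -/

/-- The lexicographic `<` on `List ℝ` coincides (definitionally) with `List.Lex (<)`. -/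
lemma list_lt_iff_lex {l m : List ℝ} : l < m ↔ List.Lex (· < ·) l m := Iff.rfl

/-- Splitting the multiset of values of a function on `Fin (n+1)` at a pivot `j`. -/
lemma ms_ofFn_succAbove {n : ℕ} (f : Fin (n + 1) → ℝ) (j : Fin (n + 1)) :
    (↑(List.ofFn f) : Multiset ℝ) =
      f j ::ₘ (↑(List.ofFn fun i : Fin n => f (j.succAbove i)) : Multiset ℝ) := by
  have h : ∀ m (g : Fin m → ℝ), (↑(List.ofFn g) : Multiset ℝ) =
      Multiset.map g (Finset.univ.val) := by
    intro m g
    rw [List.ofFn_eq_map, Fin.univ_def]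
    rfl
  rw [h (n + 1) f, h n _, Fin.univ_succAbove n j, Finset.cons_val, Multiset.map_cons,
    Finset.map_val, Multiset.map_map]
  rfl

lemma sort_cons_eq_orderedInsert (a : ℝ) (s : Multiset ℝ) :
    (a ::ₘ s).sort (· ≤ ·) = List.orderedInsert (· ≤ ·) a (s.sort (· ≤ ·)) := by
  refine (fun h a b => List.Perm.eq_of_pairwise' a b h) ?_ (Multiset.pairwise_sort _ _)
    (List.Pairwise.orderedInsert a _ (Multiset.pairwise_sort s _))
  have h1 : ((a ::ₘ s).sort (· ≤ ·)).Perm (a :: s.sort (· ≤ ·)) := by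
    rw [← Multiset.coe_eq_coe, Multiset.sort_eq, ← Multiset.cons_coe, Multiset.sort_eq]
  exact h1.trans (List.perm_orderedInsert _ a _).symm

lemma sort_cons_one (s : Multiset ℝ) (hs : ∀ x ∈ s, x ≤ 1) :
    ((1 : ℝ) ::ₘ s).sort (· ≤ ·) = s.sort (· ≤ ·) ++ [1] := by
  refine (fun h a b => List.Perm.eq_of_pairwise' a b h) ?_ (Multiset.pairwise_sort _ _) ?_
  · have h1 : (((1 : ℝ) ::ₘ s).sort (· ≤ ·)).Perm (1 :: s.sort (· ≤ ·)) := by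
      rw [← Multiset.coe_eq_coe, Multiset.sort_eq, ← Multiset.cons_coe, Multiset.sort_eq]
    exact h1.trans (List.perm_append_singleton 1 _).symm
  · refine (List.pairwise_append).mpr
      ⟨Multiset.pairwise_sort _ _, List.pairwise_singleton _ _, ?_⟩
    intro x hx b hb
    rw [List.mem_singleton] at hb
    subst hb
    exact hs x (by rwa [Multiset.mem_sort] at hx)

lemma cons_le_cons_self (a : ℝ) {l m : List ℝ} (h : l ≤ m) : a :: l ≤ a :: m := by
  rcases lt_or_eq_of_le h with h | h
  · exact le_of_lt (List.Lex.cons (list_lt_iff_lex.mp h))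
  · subst h; exact le_rfl

lemma orderedInsert_le_append_one :
    ∀ (l : List ℝ), ∀ a : ℝ, a ≤ 1 → l.Pairwise (· ≤ ·) → (∀ x ∈ l, x ≤ 1) →
      List.orderedInsert (· ≤ ·) a l ≤ l ++ [1] := by
  intro l
  induction l with
  | nil =>
    intro a ha _ _
    rcases lt_or_eq_of_le ha with h | h
    · exact le_of_lt (List.Lex.rel h)
    · subst h; exact le_rfl
  | cons x t ih =>
    intro a ha hs hb
    rw [List.orderedInsert]
    by_cases hax : a ≤ x
    · rw [if_pos hax]
      rcases lt_or_eq_of_le hax with h | h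
      · exact le_of_lt (List.Lex.rel h)
      · subst h
        have hxt : List.orderedInsert (· ≤ ·) a t = a :: t := by
          cases t with
          | nil => rfl
          | cons y s =>
            have : a ≤ y := (List.pairwise_cons.mp hs).1 y List.mem_cons_self
            simp [List.orderedInsert, this]
        have hrec := ih a ha (List.pairwise_cons.mp hs).2
          (fun z hz => hb z (List.mem_cons_of_mem _ hz))
        rw [hxt] at hrec
        have goal : a :: (a :: t) ≤ a :: (t ++ [1]) := cons_le_cons_self a hrec
        simpa using goal
    · rw [if_neg hax]
      have hrec := ih a ha (List.pairwise_cons.mp hs).2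
        (fun y hy => hb y (List.mem_cons_of_mem _ hy))
      have goal : x :: List.orderedInsert (· ≤ ·) a t ≤ x :: (t ++ [1]) :=
        cons_le_cons_self x hrec
      simpa using goal

lemma lex_append_one {l m : List ℝ} (h : List.Lex (· < ·) l m)
    (hlen : l.length = m.length) : List.Lex (· < ·) (l ++ [(1:ℝ)]) (m ++ [(1:ℝ)]) := by
  induction h with
  | nil => simp at hlen
  | rel h => exact List.Lex.rel h
  | @cons a l₁ l₂ h ih =>
    simp only [List.length_cons, Nat.add_right_cancel_iff] at hlen
    exact List.Lex.cons (ih hlen)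

lemma append_one_le_append_one {l m : List ℝ} (h : l ≤ m) (hlen : l.length = m.length) :
    l ++ [(1:ℝ)] ≤ m ++ [(1:ℝ)] := by
  rcases lt_or_eq_of_le h with h | h
  · exact le_of_lt (list_lt_iff_lex.mpr (lex_append_one (list_lt_iff_lex.mp h) hlen))
  · subst h; exact le_rfl

/-- strict D-dominance is preserved under deleting a coordinate `j`
with `u j < v j` (the vectors have `n + 1 ≥ 2` coordinates). -/
theorem stmt_13 {n : ℕ} (hn : 1 ≤ n) (u v : Fin (n + 1) → ℝ)
    (hu : ∀ i, u i ∈ Set.Icc (0 : ℝ) 1) (hv : ∀ i, v i ∈ Set.Icc (0 : ℝ) 1)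
    (hdom : LeximinGT (dproj u v) (dproj v u))
    (j : Fin (n + 1)) (hj : u j < v j) :
    LeximinGT
      (dproj (fun i : Fin n => u (j.succAbove i)) (fun i : Fin n => v (j.succAbove i)))
      (dproj (fun i : Fin n => v (j.succAbove i)) (fun i : Fin n => u (j.succAbove i))) := by
  classical
  set u' : Fin n → ℝ := fun i => u (j.succAbove i) with hu'
  set v' : Fin n → ℝ := fun i => v (j.succAbove i) with hv'
  set A : Multiset ℝ := ↑(List.ofFn (dproj u' v')) with hA
  set B : Multiset ℝ := ↑(List.ofFn (dproj v' u')) with hB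
  -- elements of A and B are ≤ 1
  have hAle : ∀ x ∈ A, x ≤ 1 := by
    intro x hx
    rw [hA, Multiset.mem_coe, List.mem_ofFn] at hx
    obtain ⟨i, rfl⟩ := hx
    simp only [dproj]
    split
    · exact (hu _).2
    · exact le_rfl
  have hBle : ∀ x ∈ B, x ≤ 1 := by
    intro x hx
    rw [hB, Multiset.mem_coe, List.mem_ofFn] at hx
    obtain ⟨i, rfl⟩ := hx
    simp only [dproj]
    split
    · exact (hv _).2
    · exact le_rfl
  -- rewrite the two sorted vectors of the big vectors
  have hdpu : dproj u v j = u j := if_pos hj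
  have hdpv : dproj v u j = 1 := if_neg (not_lt.mpr hj.le)
  have hUA : (↑(List.ofFn fun i : Fin n => dproj u v (j.succAbove i)) : Multiset ℝ) = A := rfl
  have hVB : (↑(List.ofFn fun i : Fin n => dproj v u (j.succAbove i)) : Multiset ℝ) = B := rfl
  have hsplitU : sortedVec (dproj u v) =
      List.orderedInsert (· ≤ ·) (u j) (A.sort (· ≤ ·)) := by
    rw [sortedVec, ms_ofFn_succAbove (dproj u v) j, hdpu, hUA, sort_cons_eq_orderedInsert]
  have hsplitV : sortedVec (dproj v u) = B.sort (· ≤ ·) ++ [1] := by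
    rw [sortedVec, ms_ofFn_succAbove (dproj v u) j, hdpv, hVB, sort_cons_one B hBle]
  rw [LeximinGT, hsplitU, hsplitV] at hdom
  have hdom' : B.sort (· ≤ ·) ++ [(1:ℝ)] <
      List.orderedInsert (· ≤ ·) (u j) (A.sort (· ≤ ·)) := list_lt_iff_lex.mpr hdom
  -- the goal
  show List.Lex (· < ·) (Multiset.sort B (· ≤ ·)) (Multiset.sort A (· ≤ ·))
  rw [← list_lt_iff_lex]
  by_contra hcon
  have hle : A.sort (· ≤ ·) ≤ B.sort (· ≤ ·) := le_of_not_gt hcon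
  have hlen : (A.sort (· ≤ ·)).length = (B.sort (· ≤ ·)).length := by
    simp [Multiset.length_sort, hA, hB]
  have h1 : List.orderedInsert (· ≤ ·) (u j) (A.sort (· ≤ ·)) ≤ A.sort (· ≤ ·) ++ [1] :=
    orderedInsert_le_append_one _ (u j) (hj.trans_le (hv j).2).le
      (Multiset.pairwise_sort _ _) (fun x hx => hAle x (by rwa [Multiset.mem_sort] at hx))
  have h2 : A.sort (· ≤ ·) ++ [(1:ℝ)] ≤ B.sort (· ≤ ·) ++ [1] :=
    append_one_le_append_one hle hlen
  exact absurd (hdom'.trans_le (h1.trans h2)) (lt_irrefl _)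
end
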